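/- Let G = (ℤ/2ℤ)^(3k+1) for k ≥ 1 and R = {x : 1 ≤ |x| ≤ 2k}. For every z ∈ G with 2k+1 ≤ |z| ≤ 3k+1, the number of ordered pairs (x, y) with x, y ∈ R and x + y = z is at least 2^k. -/
import Mathlib


/-- Hamming weight of a vector in (ℤ/2ℤ)^m. -/
def hwt {m : ℕ} (x : Fin m → ZMod 2) : ℕ :=
  (Finset.univ.filter (fun i => x i = 1)).card

/-- indicator vector of a finset -/
def chi {m : ℕ} (A : Finset (Fin m)) : Fin m → ZMod 2 := fun i => if i ∈ A then 1 else 0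

lemma chi_filter {m : ℕ} (A : Finset (Fin m)) :
    Finset.univ.filter (fun i => chi A i = 1) = A := by
  ext i
  simp only [Finset.mem_filter, Finset.mem_univ, true_and, chi]
  by_cases h : i ∈ A <;> simp [h]

lemma hwt_chi {m : ℕ} (A : Finset (Fin m)) : hwt (chi A) = A.card := by
  rw [hwt, chi_filter]

lemma chi_inj {m : ℕ} : Function.Injective (chi (m := m)) := by
  intro A A' h
  rw [← chi_filter A, ← chi_filter A', h]

lemma zmod2_cases (a : ZMod 2) : a = 0 ∨ a = 1 := by revert a; decide

theorem stmt_4 (k : ℕ) (hk : 1 ≤ k)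
    (R : Set (Fin (3 * k + 1) → ZMod 2))
    (hR : R = {x | 1 ≤ hwt x ∧ hwt x ≤ 2 * k})
    (z : Fin (3 * k + 1) → ZMod 2)
    (hz1 : 2 * k + 1 ≤ hwt z) (hz2 : hwt z ≤ 3 * k + 1) :
    2 ^ k ≤ {p : (Fin (3 * k + 1) → ZMod 2) × (Fin (3 * k + 1) → ZMod 2) |
      p.1 ∈ R ∧ p.2 ∈ R ∧ p.1 + p.2 = z}.ncard := by
  classical
  set S : Finset (Fin (3 * k + 1)) := Finset.univ.filter (fun i => z i = 1) with hSdef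
  have hSw : S.card = hwt z := rfl
  set w := hwt z with hw
  -- choose K ⊆ S with card k
  obtain ⟨K, hKS, hKcard⟩ : ∃ K ⊆ S, K.card = k :=
    Finset.exists_subset_card_eq (by omega : k ≤ S.card)
  -- choose B ⊆ S \ K with card w - 2k
  have hSK : (S \ K).card = w - k := by rw [Finset.card_sdiff_of_subset hKS, hSw, hKcard]
  obtain ⟨B, hBSK, hBcard⟩ : ∃ B ⊆ S \ K, B.card = w - 2 * k :=
    Finset.exists_subset_card_eq (by omega : w - 2 * k ≤ (S \ K).card)
  obtain ⟨e, he⟩ : ∃ e, e ∈ B := Finset.card_pos.mp (by omega)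
  -- the map from subsets of K to finsets
  set g : Finset (Fin (3 * k + 1)) → Finset (Fin (3 * k + 1)) :=
    fun C => C ∪ (if (w - 2 * k) + C.card ≤ 2 * k then B else B.erase e) with hg
  -- facts about g C for C ⊆ K
  have key : ∀ C ⊆ K, g C ⊆ S ∧ w - 2 * k ≤ (g C).card ∧ 1 ≤ (g C).card ∧ (g C).card ≤ 2 * k ∧
      (g C) ∩ K = C := by
    intro C hCK
    have hCk : C.card ≤ k := le_trans (Finset.card_le_card hCK) hKcard.le
    have hB'B : (if (w - 2 * k) + C.card ≤ 2 * k then B else B.erase e) ⊆ B := by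
      split
      · exact subset_rfl
      · exact Finset.erase_subset _ _
    have hdisj : Disjoint C (if (w - 2 * k) + C.card ≤ 2 * k then B else B.erase e) := by
      refine Finset.disjoint_left.mpr fun a haC haB => ?_
      have := hBSK (hB'B haB)
      exact (Finset.mem_sdiff.mp this).2 (hCK haC)
    have hcard : (g C).card = C.card +
        (if (w - 2 * k) + C.card ≤ 2 * k then B else B.erase e).card :=
      Finset.card_union_of_disjoint hdisj
    have hB'card : (if (w - 2 * k) + C.card ≤ 2 * k then B else B.erase e).card =
        if (w - 2 * k) + C.card ≤ 2 * k then w - 2 * k else w - 2 * k - 1 := by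
      split
      · exact hBcard
      · rw [Finset.card_erase_of_mem he, hBcard]
    refine ⟨?_, ?_, ?_, ?_, ?_⟩
    · exact Finset.union_subset (hCK.trans hKS)
        (hB'B.trans (hBSK.trans (Finset.sdiff_subset)))
    · rw [hcard, hB'card]; split <;> omega
    · rw [hcard, hB'card]; split <;> omega
    · rw [hcard, hB'card]; split <;> omega
    · rw [hg]
      simp only
      rw [Finset.union_inter_distrib_right]
      have : (if (w - 2 * k) + C.card ≤ 2 * k then B else B.erase e) ∩ K = ∅ := by
        refine Finset.eq_empty_of_forall_notMem fun a ha => ?_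
        rcases Finset.mem_inter.mp ha with ⟨h1, h2⟩
        exact (Finset.mem_sdiff.mp (hBSK (hB'B h1))).2 h2
      rw [this, Finset.union_empty, Finset.inter_eq_left.mpr hCK]
  -- sum property
  have hsum : ∀ A ⊆ S, chi A + chi (S \ A) = z := by
    intro A hAS
    funext i
    by_cases hiS : i ∈ S
    · have hzi : z i = 1 := (Finset.mem_filter.mp hiS).2
      by_cases hiA : i ∈ A
      · have : i ∉ S \ A := fun h => (Finset.mem_sdiff.mp h).2 hiA
        simp [chi, hiA, this, hzi]
      · have : i ∈ S \ A := Finset.mem_sdiff.mpr ⟨hiS, hiA⟩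
        simp [chi, hiA, this, hzi]
    · have hzi : z i = 0 := by
        rcases zmod2_cases (z i) with h | h
        · exact h
        · exact absurd (Finset.mem_filter.mpr ⟨Finset.mem_univ i, h⟩) hiS
      have h1 : i ∉ A := fun h => hiS (hAS h)
      have h2 : i ∉ S \ A := fun h => hiS (Finset.mem_sdiff.mp h).1
      simp [chi, h1, h2, hzi]
  -- assemble the family of pairs
  set T : Finset ((Fin (3 * k + 1) → ZMod 2) × (Fin (3 * k + 1) → ZMod 2)) :=
    K.powerset.image (fun C => (chi (g C), chi (S \ g C))) with hT
  have hTcard : T.card = 2 ^ k := by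
    rw [hT, Finset.card_image_of_injOn, Finset.card_powerset, hKcard]
    intro C1 h1 C2 h2 hEq
    have hC1 : C1 ⊆ K := Finset.mem_powerset.mp h1
    have hC2 : C2 ⊆ K := Finset.mem_powerset.mp h2
    have := chi_inj (congrArg Prod.fst hEq)
    calc C1 = g C1 ∩ K := ((key C1 hC1).2.2.2.2).symm
    _ = g C2 ∩ K := by rw [this]
    _ = C2 := (key C2 hC2).2.2.2.2
  have hTsub : (↑T : Set _) ⊆ {p : (Fin (3 * k + 1) → ZMod 2) × (Fin (3 * k + 1) → ZMod 2) |
      p.1 ∈ R ∧ p.2 ∈ R ∧ p.1 + p.2 = z} := by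
    intro p hp
    simp only [hT, Finset.coe_image, Set.mem_image] at hp
    obtain ⟨C, hC, rfl⟩ := hp
    have hCK : C ⊆ K := Finset.mem_powerset.mp (by exact_mod_cast hC)
    obtain ⟨hgS, hlo, h1, h2, -⟩ := key C hCK
    have hcardSA : (S \ g C).card = w - (g C).card := by
      rw [Finset.card_sdiff_of_subset hgS, hSw]
    refine ⟨?_, ?_, hsum _ hgS⟩
    · rw [hR]; exact ⟨by rw [hwt_chi]; omega, by rw [hwt_chi]; omega⟩
    · rw [hR]
      constructor
      · rw [hwt_chi, hcardSA]; omega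
      · rw [hwt_chi, hcardSA]; omega
  calc (2 : ℕ) ^ k = T.card := hTcard.symm
  _ = (↑T : Set _).ncard := (Set.ncard_coe_finset T).symm
  _ ≤ _ := Set.ncard_le_ncard hTsub (Set.toFinite _)
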